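/- Let n ≥ 1, let |ψ⁺⟩ = n^(−1/2) Σᵢ |i⟩ ⊗ |i⟩ ∈ ℂⁿ ⊗ ℂⁿ and P⁺ = |ψ⁺⟩⟨ψ⁺| the maximally entangled density matrix, and let Φ₁, Φ₂ : Matrix (Fin n) (Fin n) ℂ → Matrix (Fin n) (Fin n) ℂ be quantum channels. Then there exists a density matrix σ indexed by Fin n × Fin n × Fin n with Tr₃ σ = (id ⊗ Φ₁)(P⁺) and Tr₂ σ = (id ⊗ Φ₂)(P⁺) if and only if Φ₁ and Φ₂ are compatible. (Equivalently: the maximally entangled state is steerable by Φ₁, Φ₂ if and only if Φ₁, Φ₂ are incompatible.) -/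

import Mathlib

open Matrix BigOperators
open scoped ComplexOrder

noncomputable section

/-- A density matrix: positive semidefinite with trace 1. -/
def IsDensity {ι : Type*} [Fintype ι] (M : Matrix ι ι ℂ) : Prop :=
  M.PosSemidef ∧ M.trace = 1

/-- The Choi matrix of a linear map between matrix spaces, indexed by (output × input). -/
def choi {ι κ : Type*} [Fintype ι] [DecidableEq ι]
    (Φ : Matrix ι ι ℂ →ₗ[ℂ] Matrix κ κ ℂ) : Matrix (κ × ι) (κ × ι) ℂ :=
  fun p q => Φ (Matrix.single p.2 q.2 1) p.1 q.1

/-- A quantum channel: trace preserving with positive semidefinite Choi matrix. -/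
def IsQChannel {ι κ : Type*} [Fintype ι] [DecidableEq ι] [Fintype κ]
    (Φ : Matrix ι ι ℂ →ₗ[ℂ] Matrix κ κ ℂ) : Prop :=
  (∀ X, (Φ X).trace = X.trace) ∧ (choi Φ).PosSemidef

/-- The tensor product `Φ ⊗ Ψ` of maps on matrix spaces, determined by
`(Φ ⊗ Ψ)(X ⊗ₖ Y) = (Φ X) ⊗ₖ (Ψ Y)`. -/
def tmap {α β γ δ : Type*} [Fintype α] [DecidableEq α] [Fintype γ] [DecidableEq γ]
    (Φ : Matrix α α ℂ → Matrix β β ℂ) (Ψ : Matrix γ γ ℂ → Matrix δ δ ℂ)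
    (M : Matrix (α × γ) (α × γ) ℂ) : Matrix (β × δ) (β × δ) ℂ :=
  fun p q => ∑ a, ∑ a', ∑ c, ∑ c', M (a, c) (a', c') *
    (Φ (Matrix.single a a' 1) p.1 q.1 * Ψ (Matrix.single c c' 1) p.2 q.2)

/-- Partial trace over the second factor of a bipartite matrix. -/
def ptr2 {α β : Type*} [Fintype β] (M : Matrix (α × β) (α × β) ℂ) : Matrix α α ℂ :=
  fun a a' => ∑ b, M (a, b) (a', b)

/-- Partial trace over the first factor of a bipartite matrix. -/
def ptr1 {α β : Type*} [Fintype α] (M : Matrix (α × β) (α × β) ℂ) : Matrix β β ℂ :=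
  fun b b' => ∑ a, M (a, b) (a, b')

/-- Compatibility of two quantum channels: they arise as the two marginals of a single
channel into the tensor product. -/
def Compatible {n : ℕ} (Φ₁ Φ₂ : Matrix (Fin n) (Fin n) ℂ →ₗ[ℂ] Matrix (Fin n) (Fin n) ℂ) : Prop :=
  ∃ Φ : Matrix (Fin n) (Fin n) ℂ →ₗ[ℂ] Matrix (Fin n × Fin n) (Fin n × Fin n) ℂ,
    IsQChannel Φ ∧ ∀ ρ : Matrix (Fin n) (Fin n) ℂ, IsDensity ρ →
      ptr2 (Φ ρ) = Φ₁ ρ ∧ ptr1 (Φ ρ) = Φ₂ ρ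

/-- Partial trace over the third factor of a tripartite matrix. -/
def ptrace3 {α β γ : Type*} [Fintype γ] (M : Matrix (α × β × γ) (α × β × γ) ℂ) :
    Matrix (α × β) (α × β) ℂ :=
  fun p q => ∑ c, M (p.1, p.2, c) (q.1, q.2, c)

/-- Partial trace over the second factor of a tripartite matrix. -/
def ptrace2 {α β γ : Type*} [Fintype β] (M : Matrix (α × β × γ) (α × β × γ) ℂ) :
    Matrix (α × γ) (α × γ) ℂ :=
  fun p q => ∑ b, M (p.1, b, p.2) (q.1, b, q.2)

/-- The maximally entangled state `|ψ⁺⟩⟨ψ⁺|` with `|ψ⁺⟩ = n^{-1/2} ∑ᵢ |ii⟩`. -/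
def mePlus (n : ℕ) : Matrix (Fin n × Fin n) (Fin n × Fin n) ℂ :=
  fun p q => if p.1 = p.2 ∧ q.1 = q.2 then ((n : ℂ))⁻¹ else 0

/-! Write `J Φ` for the Choi matrix of `Φ` with the input factor first. Then
`(id ⊗ Φ)(P⁺) = n⁻¹ J Φ`, and `Φ` is recovered from `J Φ` as `X ↦ ∑ᵢⱼ Xᵢⱼ (J Φ)(i,·)(j,·)`.
So a tripartite `σ ≥ 0` is `n⁻¹ J Φ` for the completely positive map `Φ` it encodes, and the
partial traces of `σ` over the third and second factors are `n⁻¹ J` of the two marginal maps of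
`Φ`; trace preservation of `Φ` is inherited from that of its marginal `Φ₁`. Conversely a joint
channel `Φ` gives `σ = n⁻¹ J Φ`; its marginal conditions, stated on density matrices only,
extend to all matrices because density matrices span the matrix algebra. -/

open scoped MatrixOrder Matrix.Norms.L2Operator in
theorem LinearMap.eq_of_eqOn_isDensity {ι W : Type*} [Fintype ι] [DecidableEq ι]
    [AddCommGroup W] [Module ℂ W] {F G : Matrix ι ι ℂ →ₗ[ℂ] W}
    (h : ∀ ρ, IsDensity ρ → F ρ = G ρ) : F = G := by
  refine LinearMap.ext_on CStarAlgebra.span_nonneg fun M hM => ?_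
  have hM : M.PosSemidef := Matrix.nonneg_iff_posSemidef.1 hM
  by_cases h0 : M.trace = 0
  · simp [hM.trace_eq_zero_iff.1 h0]
  · have hρ : IsDensity (M.trace⁻¹ • M) :=
      ⟨hM.smul (inv_nonneg.2 hM.trace_nonneg), by simp [h0]⟩
    simpa [h0] using congrArg (M.trace • ·) (h _ hρ)

section ChoiInverse

variable {ι κ : Type*} [Fintype ι]

/-- The inverse of the Choi–Jamiołkowski correspondence, for a matrix indexed by
input × output. -/
def ofChoi (σ : Matrix (ι × κ) (ι × κ) ℂ) : Matrix ι ι ℂ →ₗ[ℂ] Matrix κ κ ℂ where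
  toFun X := Matrix.of fun w w' => ∑ i, ∑ j, X i j * σ (i, w) (j, w')
  map_add' X Y := by ext; simp [add_mul, Finset.sum_add_distrib]
  map_smul' c X := by ext; simp [mul_assoc, Finset.mul_sum]

@[simp]
theorem ofChoi_apply (σ : Matrix (ι × κ) (ι × κ) ℂ) (X : Matrix ι ι ℂ) (w w' : κ) :
    ofChoi σ X w w' = ∑ i, ∑ j, X i j * σ (i, w) (j, w') :=
  rfl

variable [DecidableEq ι]

theorem choi_ofChoi (σ : Matrix (ι × κ) (ι × κ) ℂ) :
    choi (ofChoi σ) = σ.submatrix Prod.swap Prod.swap := by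
  ext p q
  simp [choi, Matrix.single_apply, ite_and]
  rfl

theorem ofChoi_choi (Φ : Matrix ι ι ℂ →ₗ[ℂ] Matrix κ κ ℂ) :
    ofChoi ((choi Φ).submatrix Prod.swap Prod.swap) = Φ := by
  ext X w w'
  conv_rhs => rw [Matrix.matrix_eq_sum_single X]
  have hsingle (i j : ι) : Matrix.single i j (X i j) = X i j • Matrix.single i j 1 := by
    rw [Matrix.smul_single, smul_eq_mul, mul_one]
  simp only [hsingle, map_sum, map_smul, Matrix.sum_apply, Matrix.smul_apply, smul_eq_mul]
  rfl

theorem trace_choi [Fintype κ] {Φ : Matrix ι ι ℂ →ₗ[ℂ] Matrix κ κ ℂ}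
    (hΦ : ∀ X, (Φ X).trace = X.trace) : (choi Φ).trace = Fintype.card ι := by
  rw [Matrix.trace, Fintype.sum_prod_type_right]
  change ∑ i, (Φ (Matrix.single i i 1)).trace = _
  simp [hΦ, Matrix.trace_single_eq_same]

end ChoiInverse

section PartialTrace

variable {ι α β : Type*}

def ptr2ₗ [Fintype β] : Matrix (α × β) (α × β) ℂ →ₗ[ℂ] Matrix α α ℂ where
  toFun := ptr2
  map_add' M N := by ext; simp [ptr2, Finset.sum_add_distrib]
  map_smul' c M := by ext; simp [ptr2, Finset.mul_sum]

def ptr1ₗ [Fintype α] : Matrix (α × β) (α × β) ℂ →ₗ[ℂ] Matrix β β ℂ where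
  toFun := ptr1
  map_add' M N := by ext; simp [ptr1, Finset.sum_add_distrib]
  map_smul' c M := by ext; simp [ptr1, Finset.mul_sum]

theorem trace_ptr2 [Fintype α] [Fintype β] (M : Matrix (α × β) (α × β) ℂ) :
    (ptr2 M).trace = M.trace := by
  simp [ptr2, Matrix.trace, Fintype.sum_prod_type]

theorem ptrace3_smul [Fintype β] (c : ℂ) (σ : Matrix (ι × α × β) (ι × α × β) ℂ) :
    ptrace3 (c • σ) = c • ptrace3 σ := by
  ext; simp [ptrace3, Finset.mul_sum]

theorem ptrace2_smul [Fintype α] (c : ℂ) (σ : Matrix (ι × α × β) (ι × α × β) ℂ) :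
    ptrace2 (c • σ) = c • ptrace2 σ := by
  ext; simp [ptrace2, Finset.mul_sum]

theorem ptr2_ofChoi [Fintype ι] [Fintype β] (σ : Matrix (ι × α × β) (ι × α × β) ℂ)
    (X : Matrix ι ι ℂ) : ptr2 (ofChoi σ X) = ofChoi (ptrace3 σ) X := by
  ext x x'
  simp only [ptr2, ptrace3, ofChoi_apply, Finset.mul_sum]
  rw [Finset.sum_comm]
  exact Finset.sum_congr rfl fun _ _ => Finset.sum_comm

theorem ptr1_ofChoi [Fintype ι] [Fintype α] (σ : Matrix (ι × α × β) (ι × α × β) ℂ)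
    (X : Matrix ι ι ℂ) : ptr1 (ofChoi σ X) = ofChoi (ptrace2 σ) X := by
  ext y y'
  simp only [ptr1, ptrace2, ofChoi_apply, Finset.mul_sum]
  rw [Finset.sum_comm]
  exact Finset.sum_congr rfl fun _ _ => Finset.sum_comm

variable {κ γ : Type*} [Fintype ι] [DecidableEq ι] [Fintype γ] [DecidableEq γ]

theorem ptrace3_tmap [Fintype β] (Φ : Matrix ι ι ℂ → Matrix κ κ ℂ)
    (Ψ : Matrix γ γ ℂ → Matrix (α × β) (α × β) ℂ) (M : Matrix (ι × γ) (ι × γ) ℂ) :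
    ptrace3 (tmap Φ Ψ M) = tmap Φ (ptr2 ∘ Ψ) M := by
  ext p q
  simp only [ptrace3, tmap, ptr2, Function.comp_apply, Finset.mul_sum]
  iterate 3 (rw [Finset.sum_comm]; refine Finset.sum_congr rfl fun _ _ => ?_)
  exact Finset.sum_comm

theorem ptrace2_tmap [Fintype α] (Φ : Matrix ι ι ℂ → Matrix κ κ ℂ)
    (Ψ : Matrix γ γ ℂ → Matrix (α × β) (α × β) ℂ) (M : Matrix (ι × γ) (ι × γ) ℂ) :
    ptrace2 (tmap Φ Ψ M) = tmap Φ (ptr1 ∘ Ψ) M := by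
  ext p q
  simp only [ptrace2, tmap, ptr1, Function.comp_apply, Finset.mul_sum]
  iterate 3 (rw [Finset.sum_comm]; refine Finset.sum_congr rfl fun _ _ => ?_)
  exact Finset.sum_comm

end PartialTrace

section MaximallyEntangled

variable {n : ℕ} {κ : Type*}

theorem tmap_id_mePlus (Φ : Matrix (Fin n) (Fin n) ℂ →ₗ[ℂ] Matrix κ κ ℂ) :
    tmap id Φ (mePlus n) = (n : ℂ)⁻¹ • (choi Φ).submatrix Prod.swap Prod.swap := by
  ext ⟨i, w⟩ ⟨j, w'⟩
  simp [tmap, mePlus, choi, Matrix.single_apply, ite_and]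

theorem ofChoi_smul_tmap_id_mePlus (hn : n ≠ 0)
    (Φ : Matrix (Fin n) (Fin n) ℂ →ₗ[ℂ] Matrix κ κ ℂ) :
    ofChoi ((n : ℂ) • tmap id Φ (mePlus n)) = Φ := by
  rw [tmap_id_mePlus, smul_inv_smul₀ (Nat.cast_ne_zero.2 hn), ofChoi_choi]

theorem trace_tmap_id_mePlus [Fintype κ] (hn : n ≠ 0)
    {Φ : Matrix (Fin n) (Fin n) ℂ →ₗ[ℂ] Matrix κ κ ℂ} (hΦ : ∀ X, (Φ X).trace = X.trace) :
    (tmap id Φ (mePlus n)).trace = 1 := by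
  have hswap : ((choi Φ).submatrix Prod.swap Prod.swap).trace = (choi Φ).trace :=
    Equiv.sum_comp (Equiv.prodComm _ _) fun p => choi Φ p p
  rw [tmap_id_mePlus, Matrix.trace_smul, hswap, trace_choi hΦ, Fintype.card_fin, smul_eq_mul,
    inv_mul_cancel₀ (Nat.cast_ne_zero.2 hn)]

end MaximallyEntangled

section Steering

variable {n : ℕ} {Φ₁ Φ₂ : Matrix (Fin n) (Fin n) ℂ →ₗ[ℂ] Matrix (Fin n) (Fin n) ℂ}

theorem compatible_of_ptrace_eq_tmap_id_mePlus (hn : n ≠ 0)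
    (hΦ₁ : ∀ X, (Φ₁ X).trace = X.trace)
    {σ : Matrix (Fin n × Fin n × Fin n) (Fin n × Fin n × Fin n) ℂ} (hσ : σ.PosSemidef)
    (h₁ : ptrace3 σ = tmap id Φ₁ (mePlus n)) (h₂ : ptrace2 σ = tmap id Φ₂ (mePlus n)) :
    Compatible Φ₁ Φ₂ := by
  set Φ := ofChoi ((n : ℂ) • σ)
  have hmarg₁ : ∀ X, ptr2 (Φ X) = Φ₁ X := by
    simp [Φ, ptr2_ofChoi, ptrace3_smul, h₁, ofChoi_smul_tmap_id_mePlus hn]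
  have hmarg₂ : ∀ X, ptr1 (Φ X) = Φ₂ X := by
    simp [Φ, ptr1_ofChoi, ptrace2_smul, h₂, ofChoi_smul_tmap_id_mePlus hn]
  refine ⟨Φ, ⟨fun X => ?_, ?_⟩, fun ρ _ => ⟨hmarg₁ ρ, hmarg₂ ρ⟩⟩
  · rw [← trace_ptr2, hmarg₁, hΦ₁]
  · rw [choi_ofChoi]
    exact (hσ.smul (Nat.cast_nonneg n)).submatrix _

theorem exists_ptrace_eq_tmap_id_mePlus (hn : n ≠ 0) (h : Compatible Φ₁ Φ₂) :
    ∃ σ : Matrix (Fin n × Fin n × Fin n) (Fin n × Fin n × Fin n) ℂ, IsDensity σ ∧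
      ptrace3 σ = tmap id Φ₁ (mePlus n) ∧ ptrace2 σ = tmap id Φ₂ (mePlus n) := by
  obtain ⟨Φ, ⟨hΦ, hchoi⟩, hmarg⟩ := h
  have h₁ : ptr2ₗ ∘ₗ Φ = Φ₁ := LinearMap.eq_of_eqOn_isDensity fun ρ hρ => (hmarg ρ hρ).1
  have h₂ : ptr1ₗ ∘ₗ Φ = Φ₂ := LinearMap.eq_of_eqOn_isDensity fun ρ hρ => (hmarg ρ hρ).2
  refine ⟨tmap id Φ (mePlus n), ⟨?_, trace_tmap_id_mePlus hn hΦ⟩, ?_, ?_⟩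
  · rw [tmap_id_mePlus]
    exact (hchoi.submatrix _).smul (by positivity)
  · rw [ptrace3_tmap, ← h₁]
    rfl
  · rw [ptrace2_tmap, ← h₂]
    rfl

end Steering

theorem mePlus_not_steerable_iff_compatible_general {n : ℕ} (hn : 1 ≤ n)
    (Φ₁ Φ₂ : Matrix (Fin n) (Fin n) ℂ →ₗ[ℂ] Matrix (Fin n) (Fin n) ℂ)
    (hΦ₁ : IsQChannel Φ₁) :
    (∃ σ : Matrix (Fin n × Fin n × Fin n) (Fin n × Fin n × Fin n) ℂ,
        IsDensity σ ∧
        ptrace3 σ = tmap id (⇑Φ₁) (mePlus n) ∧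
        ptrace2 σ = tmap id (⇑Φ₂) (mePlus n)) ↔
      Compatible Φ₁ Φ₂ := by
  have hn₀ : n ≠ 0 := Nat.one_le_iff_ne_zero.1 hn
  exact ⟨fun ⟨_, hσ, h₁, h₂⟩ => compatible_of_ptrace_eq_tmap_id_mePlus hn₀ hΦ₁.1 hσ.1 h₁ h₂,
    exists_ptrace_eq_tmap_id_mePlus hn₀⟩

/-- the maximally entangled state is not steerable by channels `Φ₁, Φ₂`
(i.e. a joint tripartite state with the right marginals exists) iff `Φ₁, Φ₂` are compatible. -/
theorem mePlus_not_steerable_iff_compatible {n : ℕ} (hn : 1 ≤ n)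
    (Φ₁ Φ₂ : Matrix (Fin n) (Fin n) ℂ →ₗ[ℂ] Matrix (Fin n) (Fin n) ℂ)
    (hΦ₁ : IsQChannel Φ₁) (hΦ₂ : IsQChannel Φ₂) :
    (∃ σ : Matrix (Fin n × Fin n × Fin n) (Fin n × Fin n × Fin n) ℂ,
        IsDensity σ ∧
        ptrace3 σ = tmap id (⇑Φ₁) (mePlus n) ∧
        ptrace2 σ = tmap id (⇑Φ₂) (mePlus n)) ↔
      Compatible Φ₁ Φ₂ :=
  mePlus_not_steerable_iff_compatible_general hn Φ₁ Φ₂ hΦ₁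

end
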